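/- arXiv:math/0411519 — 4 statements merged into one kernel-verified Lean document; each statement's English description precedes it below -/
import Mathlib

section
/- Let (A, φ) be an algebraic probability space and B an additive increment process in (A, φ) that is stationary and has pyramidally independent increments, and such that for k = 1, 2, 3 the map t ↦ φ(B_t^k) is continuous on (0, ∞). Then there exist constants α, β, γ ∈ ℂ such that for all t > 0: φ(B_t) = α t, φ(B_t²) = α² t² + β t, and φ(B_t³) = α³ t³ + 3 α β t² + γ t. -/
lemma cauchyC {f : ℝ → ℂ}
    (hadd : ∀ s u : ℝ, 0 < s → 0 < u → f (s + u) = f s + f u)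
    (hc : ContinuousOn f (Set.Ioi 0)) :
    ∃ c : ℂ, ∀ t : ℝ, 0 < t → f t = c * t := by
  refine ⟨f 1, ?_⟩
  have hn : ∀ n : ℕ, 0 < n → ∀ t : ℝ, 0 < t → f ((n : ℝ) * t) = (n : ℂ) * f t := by
    intro n
    induction n with
    | zero => intro h; exact absurd h (lt_irrefl 0)
    | succ n ih =>
      intro _ t ht
      rcases Nat.eq_zero_or_pos n with h0 | hpos
      · subst h0; simp
      · have h1 : ((n + 1 : ℕ) : ℝ) * t = (n : ℝ) * t + t := by push_cast; ring
        rw [h1, hadd _ _ (mul_pos (by exact_mod_cast hpos) ht) ht, ih hpos t ht]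
        push_cast; ring
  have hq : ∀ q : ℚ, 0 < q → f ((q : ℝ)) = f 1 * ((q : ℝ) : ℂ) := by
    intro q hq0
    have hnum : 0 < q.num := Rat.num_pos.mpr hq0
    have hqr : 0 < (q : ℝ) := by exact_mod_cast hq0
    have hdpos : 0 < q.den := q.pos
    have h2 : (q.den : ℝ) * (q : ℝ) = (q.num : ℝ) := by
      rw [Rat.cast_def]
      field_simp
    have h3 : f ((q.num.toNat : ℝ) * 1) = (q.num.toNat : ℂ) * f 1 :=
      hn q.num.toNat (by omega) 1 one_pos
    have hcast : (q.num.toNat : ℝ) = (q.num : ℝ) := by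
      exact_mod_cast Int.toNat_of_nonneg hnum.le
    have hcastC : (q.num.toNat : ℂ) = (q.num : ℂ) := by
      exact_mod_cast Int.toNat_of_nonneg hnum.le
    rw [mul_one, hcast, hcastC] at h3
    have h4 : f ((q.den : ℝ) * (q : ℝ)) = (q.den : ℂ) * f (q : ℝ) :=
      hn q.den hdpos _ hqr
    rw [h2, h3] at h4
    have hdC : ((q.den : ℂ)) ≠ 0 := by exact_mod_cast hdpos.ne'
    have hqC : ((q : ℝ) : ℂ) = (q.num : ℂ) / (q.den : ℂ) := by
      push_cast [Rat.cast_def]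
      ring
    rw [hqC, ← mul_div_assoc, eq_div_iff hdC]
    linear_combination -h4
  intro t ht
  have hex : ∀ n : ℕ, ∃ q : ℚ, max (t / 2) (t - 1 / (n + 1)) < (q : ℝ) ∧ (q : ℝ) < t := by
    intro n
    apply exists_rat_btwn
    have h01 : (0:ℝ) < 1 / (n + 1) := by positivity
    apply max_lt (by linarith) (by linarith)
  choose q hq1 hq2 using hex
  have hqpos : ∀ n, 0 < q n := by
    intro n
    have := lt_of_le_of_lt (le_max_left (t/2) (t - 1/(n+1))) (hq1 n)
    have : (0:ℝ) < (q n : ℝ) := by linarith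
    exact_mod_cast this
  have hlow : Filter.Tendsto (fun n : ℕ => t - 1 / (n + 1 : ℝ)) Filter.atTop (nhds t) := by
    have := (tendsto_const_nhds (x := t) (f := Filter.atTop (α := ℕ))).sub
      tendsto_one_div_add_atTop_nhds_zero_nat
    simpa using this
  have htend : Filter.Tendsto (fun n => ((q n : ℝ))) Filter.atTop (nhds t) := by
    apply tendsto_of_tendsto_of_tendsto_of_le_of_le hlow tendsto_const_nhds
    · intro n
      exact (le_max_right _ _).trans (hq1 n).le
    · intro n
      exact (hq2 n).le
  have hct : ContinuousAt f t := hc.continuousAt (Ioi_mem_nhds ht)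
  have h1 : Filter.Tendsto (fun n => f (q n)) Filter.atTop (nhds (f t)) :=
    hct.tendsto.comp htend
  have h2 : Filter.Tendsto (fun n => f (q n)) Filter.atTop (nhds (f 1 * (t : ℂ))) := by
    have hc2 : Filter.Tendsto (fun n => f 1 * (((q n : ℝ)) : ℂ)) Filter.atTop
        (nhds (f 1 * (t : ℂ))) :=
      tendsto_const_nhds.mul ((Complex.continuous_ofReal.tendsto t).comp htend)
    refine hc2.congr fun n => ?_
    exact (hq (q n) (hqpos n)).symm
  exact tendsto_nhds_unique h1 h2

set_option maxHeartbeats 1000000 in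
/-- For a stationary additive increment process with pyramidally
independent increments in an algebraic probability space `(A, φ)`, whose first
three moment functions `t ↦ φ(B_t^k)` (k = 1,2,3) are continuous on `(0,∞)`,
there are constants `α, β, γ ∈ ℂ` with
`φ(B_t) = α t`, `φ(B_t²) = α² t² + β t`, `φ(B_t³) = α³ t³ + 3 α β t² + γ t`
for all `t > 0`. -/
theorem moments_of_stationary_pyramidal_process
    {A : Type*} [Ring A] [Algebra ℂ A]
    (φ : A →ₗ[ℂ] ℂ) (hφ1 : φ 1 = 1)
    (B : ℝ → ℝ → A)
    -- additivity of increments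
    (hadd : ∀ s t u : ℝ, s < t → t < u → B s u = B s t + B t u)
    -- stationarity
    (hstat : ∀ (n : ℕ), 0 < n → ∀ I : Fin n → ℝ × ℝ,
      (∀ m, (I m).1 < (I m).2) → ∀ u : ℝ,
      φ (List.ofFn (fun m => B ((I m).1 + u) ((I m).2 + u))).prod
        = φ (List.ofFn (fun m => B (I m).1 (I m).2)).prod)
    -- pyramidally independent increments
    (hpyr : ∀ u v : ℝ, u < v →
      ∀ b ∈ Algebra.adjoin ℂ
        {x : A | ∃ s t : ℝ, s < t ∧ Set.Ico s t ⊆ Set.Ico u v ∧ x = B s t},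
      ∀ a₁ ∈ Algebra.adjoin ℂ
        {x : A | ∃ s t : ℝ, s < t ∧ Set.Ico s t ⊆ (Set.Ico u v)ᶜ ∧ x = B s t},
      ∀ a₂ ∈ Algebra.adjoin ℂ
        {x : A | ∃ s t : ℝ, s < t ∧ Set.Ico s t ⊆ (Set.Ico u v)ᶜ ∧ x = B s t},
      φ (a₁ * b * a₂) = φ (a₁ * a₂) * φ b)
    -- continuity of the first three moments on (0,∞)
    (hcont : ∀ k : ℕ, k = 1 ∨ k = 2 ∨ k = 3 →
      ContinuousOn (fun t : ℝ => φ ((B 0 t) ^ k)) (Set.Ioi 0)) :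
    ∃ α β γ : ℂ, ∀ t : ℝ, 0 < t →
      φ (B 0 t) = α * (t : ℂ) ∧
      φ ((B 0 t) ^ 2) = α ^ 2 * (t : ℂ) ^ 2 + β * (t : ℂ) ∧
      φ ((B 0 t) ^ 3)
        = α ^ 3 * (t : ℂ) ^ 3 + 3 * α * β * (t : ℂ) ^ 2 + γ * (t : ℂ) := by
  -- stationarity for powers
  have stat : ∀ k : ℕ, 0 < k → ∀ s u : ℝ, 0 < u →
      φ (B s (s + u) ^ k) = φ (B 0 u ^ k) := by
    intro k hk s u hu
    have h := hstat k hk (fun _ => (0, u)) (fun _ => hu) s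
    simp only [List.ofFn_const, List.prod_replicate] at h
    rw [zero_add, add_comm u s] at h
    exact h
  -- mixed moment factorizations
  have mix : ∀ s u : ℝ, 0 < s → 0 < u →
      (φ (B 0 s * B s (s+u)) = φ (B 0 s) * φ (B s (s+u))) ∧
      (φ (B s (s+u) * B 0 s) = φ (B 0 s) * φ (B s (s+u))) ∧
      (φ (B 0 s * B 0 s * B s (s+u)) = φ (B 0 s * B 0 s) * φ (B s (s+u))) ∧
      (φ (B 0 s * B s (s+u) * B 0 s) = φ (B 0 s * B 0 s) * φ (B s (s+u))) ∧
      (φ (B s (s+u) * (B 0 s * B 0 s)) = φ (B 0 s * B 0 s) * φ (B s (s+u))) ∧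
      (φ (B 0 s * (B s (s+u) * B s (s+u))) = φ (B 0 s) * φ (B s (s+u) * B s (s+u))) ∧
      (φ (B s (s+u) * B s (s+u) * B 0 s) = φ (B 0 s) * φ (B s (s+u) * B s (s+u))) ∧
      (φ (B s (s+u) * B 0 s * B s (s+u)) = φ (B 0 s) * φ (B s (s+u) * B s (s+u))) := by
    intro s u hs hu
    have hsu : s < s + u := by linarith
    have hXin : B 0 s ∈ Algebra.adjoin ℂ
        {x : A | ∃ a b : ℝ, a < b ∧ Set.Ico a b ⊆ Set.Ico 0 s ∧ x = B a b} :=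
      Algebra.subset_adjoin ⟨0, s, hs, subset_rfl, rfl⟩
    have hXout : B 0 s ∈ Algebra.adjoin ℂ
        {x : A | ∃ a b : ℝ, a < b ∧ Set.Ico a b ⊆ (Set.Ico s (s+u))ᶜ ∧ x = B a b} :=
      Algebra.subset_adjoin ⟨0, s, hs,
        fun x hx hx' => absurd hx.2 (not_lt.mpr hx'.1), rfl⟩
    have hYin : B s (s+u) ∈ Algebra.adjoin ℂ
        {x : A | ∃ a b : ℝ, a < b ∧ Set.Ico a b ⊆ Set.Ico s (s+u) ∧ x = B a b} :=
      Algebra.subset_adjoin ⟨s, s+u, hsu, subset_rfl, rfl⟩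
    have hYout : B s (s+u) ∈ Algebra.adjoin ℂ
        {x : A | ∃ a b : ℝ, a < b ∧ Set.Ico a b ⊆ (Set.Ico 0 s)ᶜ ∧ x = B a b} :=
      Algebra.subset_adjoin ⟨s, s+u, hsu,
        fun x hx hx' => absurd hx'.2 (not_lt.mpr hx.1), rfl⟩
    have one_out : (1 : A) ∈ Algebra.adjoin ℂ
        {x : A | ∃ a b : ℝ, a < b ∧ Set.Ico a b ⊆ (Set.Ico s (s+u))ᶜ ∧ x = B a b} :=
      one_mem _
    refine ⟨?_, ?_, ?_, ?_, ?_, ?_, ?_, ?_⟩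
    · have := hpyr s (s+u) hsu _ hYin _ hXout _ one_out
      simpa using this
    · have := hpyr s (s+u) hsu _ hYin _ one_out _ hXout
      simpa [mul_comm] using this
    · have := hpyr s (s+u) hsu _ hYin _ (mul_mem hXout hXout) _ one_out
      simpa using this
    · have := hpyr s (s+u) hsu _ hYin _ hXout _ hXout
      simpa [mul_comm] using this
    · have := hpyr s (s+u) hsu _ hYin _ one_out _ (mul_mem hXout hXout)
      simpa [mul_comm] using this
    · have := hpyr s (s+u) hsu _ (mul_mem hYin hYin) _ hXout _ one_out
      simpa [mul_comm] using this
    · have := hpyr s (s+u) hsu _ (mul_mem hYin hYin) _ one_out _ hXout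
      simpa [mul_comm, mul_assoc] using this
    · have := hpyr 0 s hs _ hXin _ hYout _ hYout
      simpa [mul_comm] using this
  -- additivity identities for moments
  have A1 : ∀ s u : ℝ, 0 < s → 0 < u →
      φ (B 0 (s + u)) = φ (B 0 s) + φ (B 0 u) := by
    intro s u hs hu
    have h1 := stat 1 one_pos s u hu
    simp only [pow_one] at h1
    rw [hadd 0 s (s + u) hs (by linarith), map_add, h1]
  have A2 : ∀ s u : ℝ, 0 < s → 0 < u →
      φ (B 0 (s + u) ^ 2)
        = φ (B 0 s ^ 2) + φ (B 0 u ^ 2) + 2 * φ (B 0 s) * φ (B 0 u) := by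
    intro s u hs hu
    obtain ⟨e1, e2, -, -, -, -, -, -⟩ := mix s u hs hu
    have h1 := stat 1 one_pos s u hu
    have h2 := stat 2 (by norm_num) s u hu
    simp only [pow_one] at h1
    have hexp : B 0 (s + u) ^ 2
        = B 0 s * B 0 s + B 0 s * B s (s+u) + B s (s+u) * B 0 s
          + B s (s+u) * B s (s+u) := by
      rw [hadd 0 s (s + u) hs (by linarith)]
      noncomm_ring
    rw [hexp, map_add, map_add, map_add, e1, e2]
    have hx2 : φ (B 0 s * B 0 s) = φ (B 0 s ^ 2) := by rw [pow_two]
    have hy2 : φ (B s (s+u) * B s (s+u)) = φ (B 0 u ^ 2) := by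
      rw [← pow_two, h2]
    rw [hx2, hy2, h1]
    ring
  have A3 : ∀ s u : ℝ, 0 < s → 0 < u →
      φ (B 0 (s + u) ^ 3)
        = φ (B 0 s ^ 3) + φ (B 0 u ^ 3)
          + 3 * φ (B 0 s ^ 2) * φ (B 0 u) + 3 * φ (B 0 s) * φ (B 0 u ^ 2) := by
    intro s u hs hu
    obtain ⟨-, -, e3, e4, e5, e6, e7, e8⟩ := mix s u hs hu
    have h1 := stat 1 one_pos s u hu
    have h2 := stat 2 (by norm_num) s u hu
    have h3 := stat 3 (by norm_num) s u hu
    simp only [pow_one] at h1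
    have hexp : B 0 (s + u) ^ 3
        = B 0 s * B 0 s * B 0 s
          + (B 0 s * B 0 s * B s (s+u) + B 0 s * B s (s+u) * B 0 s
             + B s (s+u) * (B 0 s * B 0 s))
          + (B 0 s * (B s (s+u) * B s (s+u)) + B s (s+u) * B 0 s * B s (s+u)
             + B s (s+u) * B s (s+u) * B 0 s)
          + B s (s+u) * B s (s+u) * B s (s+u) := by
      rw [hadd 0 s (s + u) hs (by linarith)]
      noncomm_ring
    rw [hexp]
    simp only [map_add]
    rw [e3, e4, e5, e6, e7, e8]
    have hx3 : φ (B 0 s * B 0 s * B 0 s) = φ (B 0 s ^ 3) := by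
      rw [pow_succ, pow_two]
    have hx2 : φ (B 0 s * B 0 s) = φ (B 0 s ^ 2) := by rw [pow_two]
    have hy3 : φ (B s (s+u) * B s (s+u) * B s (s+u)) = φ (B 0 u ^ 3) := by
      rw [← pow_two, ← pow_succ, h3]
    have hy2 : φ (B s (s+u) * B s (s+u)) = φ (B 0 u ^ 2) := by
      rw [← pow_two, h2]
    rw [hx3, hx2, hy3, hy2, h1]
    ring
  -- continuity facts
  have cont1 : ContinuousOn (fun t : ℝ => φ (B 0 t)) (Set.Ioi 0) := by
    have := hcont 1 (Or.inl rfl)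
    simpa [pow_one] using this
  obtain ⟨α, hα⟩ := cauchyC A1 cont1
  have hadd2 : ∀ s u : ℝ, 0 < s → 0 < u →
      (fun t : ℝ => φ (B 0 t ^ 2) - α ^ 2 * (t : ℂ) ^ 2) (s + u)
        = (fun t : ℝ => φ (B 0 t ^ 2) - α ^ 2 * (t : ℂ) ^ 2) s
          + (fun t : ℝ => φ (B 0 t ^ 2) - α ^ 2 * (t : ℂ) ^ 2) u := by
    intro s u hs hu
    simp only []
    rw [A2 s u hs hu, hα s hs, hα u hu]
    push_cast
    ring
  have cont2 : ContinuousOn (fun t : ℝ => φ (B 0 t ^ 2) - α ^ 2 * (t : ℂ) ^ 2)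
      (Set.Ioi 0) := by
    apply (hcont 2 (Or.inr (Or.inl rfl))).sub
    exact (continuous_const.mul (Complex.continuous_ofReal.pow 2)).continuousOn
  obtain ⟨β, hβ⟩ := cauchyC hadd2 cont2
  have hβ' : ∀ t : ℝ, 0 < t → φ (B 0 t ^ 2) = α ^ 2 * (t : ℂ) ^ 2 + β * t := by
    intro t ht
    have := hβ t ht
    linear_combination this
  have hadd3 : ∀ s u : ℝ, 0 < s → 0 < u →
      (fun t : ℝ => φ (B 0 t ^ 3) - α ^ 3 * (t : ℂ) ^ 3 - 3 * α * β * (t : ℂ) ^ 2) (s + u)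
        = (fun t : ℝ => φ (B 0 t ^ 3) - α ^ 3 * (t : ℂ) ^ 3 - 3 * α * β * (t : ℂ) ^ 2) s
          + (fun t : ℝ => φ (B 0 t ^ 3) - α ^ 3 * (t : ℂ) ^ 3 - 3 * α * β * (t : ℂ) ^ 2) u := by
    intro s u hs hu
    simp only []
    rw [A3 s u hs hu, hα s hs, hα u hu, hβ' s hs, hβ' u hu]
    push_cast
    ring
  have cont3 : ContinuousOn
      (fun t : ℝ => φ (B 0 t ^ 3) - α ^ 3 * (t : ℂ) ^ 3 - 3 * α * β * (t : ℂ) ^ 2)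
      (Set.Ioi 0) := by
    apply ContinuousOn.sub
    · apply (hcont 3 (Or.inr (Or.inr rfl))).sub
      exact (continuous_const.mul (Complex.continuous_ofReal.pow 3)).continuousOn
    · exact (continuous_const.mul (Complex.continuous_ofReal.pow 2)).continuousOn
  obtain ⟨γ, hγ⟩ := cauchyC hadd3 cont3
  refine ⟨α, β, γ, fun t ht => ⟨hα t ht, hβ' t ht, ?_⟩⟩
  have := hγ t ht
  linear_combination this
end

section
/- Let n, k ≥ 1 and let s : {1,…,n} → {1,…,k} be a surjection. For every N ≥ k, the number of maps i : {1,…,n} → {1,…,N} that are order equivalent to s equals the binomial coefficient C(N, k). In particular, this number divided by N^k converges to 1/k! as N → ∞. -/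
open Finset Filter

lemma count_eq_choose (n k N : ℕ) (s : Fin n → Fin k) (hs : Function.Surjective s) :
    Nat.card {i : Fin n → Fin N //
        ∀ a b : Fin n, (i a : ℕ) ≤ (i b : ℕ) ↔ (s a : ℕ) ≤ (s b : ℕ)} = N.choose k := by
  classical
  set g := Function.surjInv hs with hg
  have hsg : ∀ c, s (g c) = c := Function.rightInverse_surjInv hs
  have e1 : {i : Fin n → Fin N //
        ∀ a b : Fin n, (i a : ℕ) ≤ (i b : ℕ) ↔ (s a : ℕ) ≤ (s b : ℕ)} ≃
      {f : Fin k → Fin N // StrictMono f} :=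
    { toFun := fun ⟨i, hi⟩ => ⟨i ∘ g, by
        intro c d hcd
        have h1 : (i (g c) : ℕ) ≤ i (g d) := by
          rw [hi]; simp only [hsg]; exact hcd.le
        have h2 : ¬ ((i (g d) : ℕ) ≤ i (g c)) := by
          rw [hi]; simp only [hsg]; exact not_le.2 hcd
        exact Fin.lt_def.2 (lt_of_le_of_ne h1 (fun h => h2 (h ▸ le_refl _)))⟩,
      invFun := fun ⟨f, hf⟩ => ⟨f ∘ s, by
        intro a b
        simp only [Function.comp_apply]
        rw [← Fin.le_def, ← Fin.le_def, hf.le_iff_le, Fin.le_def]⟩,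
      left_inv := by
        rintro ⟨i, hi⟩
        ext a
        simp only [Function.comp_apply]
        have h1 : (i (g (s a)) : ℕ) ≤ i a := by rw [hi]; simp [hsg]
        have h2 : (i a : ℕ) ≤ i (g (s a)) := by rw [hi]; simp [hsg]
        exact le_antisymm h1 h2
      right_inv := by
        rintro ⟨f, hf⟩
        ext c
        simp [hsg] }
  have e2 : {f : Fin k → Fin N // StrictMono f} ≃ {t : Finset (Fin N) // t.card = k} :=
    { toFun := fun ⟨f, hf⟩ => ⟨Finset.univ.image f, by
        rw [Finset.card_image_of_injective _ hf.injective, Finset.card_univ, Fintype.card_fin]⟩,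
      invFun := fun ⟨t, ht⟩ => ⟨t.orderEmbOfFin ht, (t.orderEmbOfFin ht).strictMono⟩,
      left_inv := by
        rintro ⟨f, hf⟩
        simp only [Subtype.mk.injEq]
        exact (Finset.orderEmbOfFin_unique _ (fun i => Finset.mem_image_of_mem f (mem_univ i))
          hf).symm
      right_inv := by
        rintro ⟨t, ht⟩
        simp only [Subtype.mk.injEq]
        apply Finset.coe_injective
        rw [Finset.coe_image, Finset.coe_univ, Set.image_univ]
        exact t.range_orderEmbOfFin ht }
  rw [Nat.card_congr (e1.trans e2), Nat.card_eq_fintype_card, Fintype.card_finset_len,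
    Fintype.card_fin]


lemma choose_div_tendsto (k : ℕ) :
    Tendsto (fun N : ℕ => (N.choose k : ℝ) / (N : ℝ) ^ k) atTop
      (nhds (1 / (Nat.factorial k : ℝ))) := by
  have key : Tendsto (fun N : ℕ => (∏ i ∈ range k, (1 - (i : ℝ) / N)) / k.factorial)
      atTop (nhds (1 / (Nat.factorial k : ℝ))) := by
    have h1 : Tendsto (fun N : ℕ => ∏ i ∈ range k, (1 - (i : ℝ) / N)) atTop (nhds 1) := by
      have := tendsto_finset_prod (range k)
        (fun i _ => (tendsto_const_nhds.sub (tendsto_const_div_atTop_nhds_zero_nat (i : ℝ)) :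
          Tendsto (fun N : ℕ => 1 - (i : ℝ) / N) atTop (nhds (1 - 0))))
      simpa using this
    simpa using h1.div_const (Nat.factorial k : ℝ)
  refine key.congr' ?_
  filter_upwards [eventually_ge_atTop k, eventually_ge_atTop 1] with N hN hN1
  have hNne : (N : ℝ) ≠ 0 := Nat.cast_ne_zero.2 (by omega)
  have hprod : ((∏ i ∈ range k, (N - i) : ℕ) : ℝ) = ∏ i ∈ range k, ((N : ℝ) - i) := by
    rw [Nat.cast_prod]
    exact Finset.prod_congr rfl fun i hi =>
      Nat.cast_sub (le_trans (mem_range.1 hi).le hN)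
  have h1 : (k.factorial : ℝ) * (N.choose k) = ∏ i ∈ range k, ((N : ℝ) - i) := by
    rw [← hprod, ← Nat.descFactorial_eq_prod_range]
    exact_mod_cast (Nat.descFactorial_eq_factorial_mul_choose N k).symm
  have h2 : ∏ i ∈ range k, (1 - (i : ℝ) / N) = (∏ i ∈ range k, ((N : ℝ) - i)) / N ^ k := by
    rw [eq_div_iff (pow_ne_zero _ hNne),
      show ((N : ℝ) ^ k) = ∏ _i ∈ range k, (N : ℝ) by simp, ← Finset.prod_mul_distrib]
    exact Finset.prod_congr rfl fun i hi => by field_simp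
  rw [h2, ← h1]
  have hfac : (k.factorial : ℝ) ≠ 0 := Nat.cast_ne_zero.2 k.factorial_ne_zero
  field_simp

/-- For a surjection `s : {1,…,n} → {1,…,k}` (`n, k ≥ 1`) and every
`N ≥ k`, the number of tuples `i : {1,…,n} → {1,…,N}` order equivalent to `s`
is the binomial coefficient `C(N, k)`; in particular this number divided by
`N^k` converges to `1/k!` as `N → ∞`. -/
theorem count_order_equivalent_tuples (n k : ℕ) (hn : 1 ≤ n) (hk : 1 ≤ k)
    (s : Fin n → Fin k) (hs : Function.Surjective s) :
    (∀ N : ℕ, k ≤ N →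
      Nat.card {i : Fin n → Fin N //
          ∀ a b : Fin n, (i a : ℕ) ≤ (i b : ℕ) ↔ (s a : ℕ) ≤ (s b : ℕ)}
        = N.choose k) ∧
    Filter.Tendsto (fun N : ℕ =>
        (Nat.card {i : Fin n → Fin N //
            ∀ a b : Fin n, (i a : ℕ) ≤ (i b : ℕ) ↔ (s a : ℕ) ≤ (s b : ℕ)} : ℝ)
          / (N : ℝ) ^ k)
      Filter.atTop (nhds (1 / (Nat.factorial k : ℝ))) := by
  refine ⟨fun N _ => count_eq_choose n k N s hs, ?_⟩
  exact (choose_div_tendsto k).congr fun N => by rw [count_eq_choose n k N s hs]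
end

section
/- Let (A, φ) be an algebraic probability space and, for each N ≥ 1, let b₁^{(N)}, …, b_N^{(N)} ∈ A be elements whose joint distribution is order invariant: φ(b_{i(1)}^{(N)} ⋯ b_{i(n)}^{(N)}) = φ(b_{j(1)}^{(N)} ⋯ b_{j(n)}^{(N)}) for all n ≥ 1 and all order-equivalent tuples i, j : {1,…,n} → {1,…,N}. Fix n ≥ 1 and assume that for every k with 1 ≤ k ≤ n and every surjection s : {1,…,n} → {1,…,k}, the limit c(s) := lim_{N→∞} N^k · φ(b_{s(1)}^{(N)} ⋯ b_{s(n)}^{(N)}) exists in ℂ (the product being defined for N ≥ k). Set S_N := b₁^{(N)} + ⋯ + b_N^{(N)}. Then lim_{N→∞} φ(S_N^n) = Σ_{k=1}^{n} (1/k!) · Σ_{s : {1,…,n} ↠ {1,…,k} surjective} c(s). -/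
/-!
Expanding `S_N ^ n` gives the sum of `φ (b_{f 1} ⋯ b_{f n})` over all `f : {1,…,n} → {1,…,N}`.
Such an `f` factors uniquely as `f = ι_T ∘ s`, where `T` is its image, of size `k ≤ n`, `ι_T` is
the increasing enumeration of `T` and `s : {1,…,n} ↠ {1,…,k}` records the relative order of the
values of `f`. By order invariance the term only depends on `s`, so every surjection `s`
contributes `N.choose k • φ (b_{s 1 + 1} ⋯ b_{s n + 1})`, and `N.choose k ∼ N ^ k / k!`.
-/

open Filter Topology Finset

theorem sum_pow_eq_sum_piFinset_prod_ofFn {ι R : Type*} [Semiring R] (S : Finset ι) (x : ι → R)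
    (m : ℕ) :
    (∑ i ∈ S, x i) ^ m
      = ∑ f ∈ Fintype.piFinset (fun _ : Fin m => S), (List.ofFn fun l => x (f l)).prod := by
  induction m with
  | zero => simp
  | succ m ih =>
    have hcons : Fintype.piFinset (fun _ : Fin (m + 1) => S)
        = (S ×ˢ Fintype.piFinset fun _ : Fin m => S).map (Fin.consEquiv fun _ => ι).toEmbedding := by
      have := filter_piFinset_eq_map_consEquiv (fun _ : Fin (m + 1) => S) fun _ => True
      simp only [filter_true] at this
      exact this
    rw [pow_succ', ih, sum_mul_sum, ← sum_product', hcons, sum_map]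
    simp [List.ofFn_succ]

section OrderPattern

variable {ι α : Type*} [Fintype ι] [LinearOrder α] {k : ℕ}

theorem Finset.image_orderEmbOfFin_comp_of_surjective (T : Finset α) (h : T.card = k)
    {s : ι → Fin k} (hs : Function.Surjective s) :
    univ.image (fun l => T.orderEmbOfFin h (s l)) = T := by
  change univ.image (T.orderEmbOfFin h ∘ s) = T
  rw [← image_image, image_univ_of_surjective hs, image_orderEmbOfFin_univ]

theorem Finset.exists_surjective_orderEmbOfFin_comp (f : ι → α) (h : (univ.image f).card = k) :
    ∃ s : ι → Fin k, Function.Surjective s ∧ ∀ l, (univ.image f).orderEmbOfFin h (s l) = f l := by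
  have hrange := range_orderEmbOfFin (univ.image f) h
  choose s hs using fun l => (hrange.symm ▸ mem_coe.2 (mem_image_of_mem f (mem_univ l)) :
    f l ∈ Set.range ((univ.image f).orderEmbOfFin h))
  refine ⟨s, fun i => ?_, hs⟩
  obtain ⟨l, -, hl⟩ := mem_image.1 (orderEmbOfFin_mem (univ.image f) h i)
  exact ⟨l, (orderEmbOfFin (univ.image f) h).injective (by rw [hs, hl])⟩

end OrderPattern

section Grouping

variable {α M : Type*} [LinearOrder α] [AddCommMonoid M] {n : ℕ}

theorem sum_piFinset_card_image_eq_sum_surjective (S : Finset α) (k : ℕ) (F : (Fin n → α) → M)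
    (G : (Fin n → Fin k) → M)
    (hFG : ∀ s : Fin n → Fin k, Function.Surjective s → ∀ T ⊆ S, ∀ h : T.card = k,
      F (fun l => T.orderEmbOfFin h (s l)) = G s) :
    ∑ f ∈ (Fintype.piFinset fun _ : Fin n => S) with (univ.image f).card = k, F f
      = ∑ s : Fin n → Fin k with Function.Surjective s, S.card.choose k • G s := by
  have hmem : ∀ p ∈ (univ.filter fun s : Fin n → Fin k => Function.Surjective s) ×ˢ
      S.powersetCard k, Function.Surjective p.1 ∧ p.2 ⊆ S ∧ p.2.card = k := by
    simp
  simp_rw [← card_powersetCard, ← sum_const, ← sum_product']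
  symm
  refine sum_bij (fun p hp => fun l => p.2.orderEmbOfFin (hmem p hp).2.2 (p.1 l)) ?_ ?_ ?_ ?_
  · rintro ⟨s, T⟩ hp
    obtain ⟨hs, hTS, hT⟩ := hmem _ hp
    simp only [mem_filter, Fintype.mem_piFinset]
    exact ⟨fun l => hTS (orderEmbOfFin_mem T hT (s l)),
      by rw [image_orderEmbOfFin_comp_of_surjective T hT hs, hT]⟩
  · rintro ⟨s, T⟩ hp ⟨s', T'⟩ hp' heq
    obtain ⟨hs, -, hT⟩ := hmem _ hp
    obtain ⟨hs', -, hT'⟩ := hmem _ hp'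
    have hTT : T = T' := by
      rw [← image_orderEmbOfFin_comp_of_surjective T hT hs,
        ← image_orderEmbOfFin_comp_of_surjective T' hT' hs']
      exact congrArg (univ.image ·) heq
    subst hTT
    simp only [Prod.mk.injEq, and_true]
    exact funext fun l => (T.orderEmbOfFin hT).injective (congrFun heq l)
  · intro f hf
    obtain ⟨hfS, hk⟩ := mem_filter.1 hf
    obtain ⟨s, hs, hsf⟩ := exists_surjective_orderEmbOfFin_comp f hk
    refine ⟨(s, univ.image f), ?_, funext hsf⟩
    simp only [mem_product, mem_filter, mem_univ, true_and, mem_powersetCard]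
    refine ⟨hs, fun a ha => ?_, hk⟩
    obtain ⟨l, -, rfl⟩ := mem_image.1 ha
    exact Fintype.mem_piFinset.1 hfS l
  · rintro ⟨s, T⟩ hp
    obtain ⟨hs, hTS, hT⟩ := hmem _ hp
    exact (hFG s hs T hTS hT).symm

theorem sum_piFinset_eq_sum_surjective (S : Finset α) (hn : n ≠ 0) (F : (Fin n → α) → M)
    (G : (k : ℕ) → (Fin n → Fin k) → M)
    (hFG : ∀ k (s : Fin n → Fin k), Function.Surjective s → ∀ T ⊆ S, ∀ h : T.card = k,
      F (fun l => T.orderEmbOfFin h (s l)) = G k s) :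
    ∑ f ∈ Fintype.piFinset (fun _ : Fin n => S), F f
      = ∑ k ∈ Icc 1 n, ∑ s : Fin n → Fin k with Function.Surjective s,
          S.card.choose k • G k s := by
  rw [← sum_fiberwise_of_maps_to (g := fun f => (univ.image f).card) (t := Icc 1 n)]
  · exact sum_congr rfl fun k _ => sum_piFinset_card_image_eq_sum_surjective S k F (G k) (hFG k)
  · intro f _
    have : (univ.image f).Nonempty := univ_nonempty_iff.2 ⟨⟨0, by omega⟩⟩ |>.image f
    simpa [Nat.one_le_iff_ne_zero, this.ne_empty] using card_image_le.trans (by simp)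

end Grouping

theorem tendsto_choose_div_pow (k : ℕ) :
    Tendsto (fun N : ℕ => (N.choose k : ℂ) / (N : ℂ) ^ k) atTop (𝓝 (1 / k.factorial)) := by
  have hr : Tendsto (fun N : ℕ => (N : ℝ) * (1 / N)) atTop (𝓝 1) :=
    tendsto_const_nhds.congr' <| by
      filter_upwards [eventually_ne_atTop 0] with N hN
      field_simp
  have := (ProbabilityTheory.tendsto_choose_mul_pow_atTop k hr).ofReal
  simpa [div_eq_mul_inv] using this

theorem tendsto_choose_mul_of_tendsto_pow_mul {u : ℕ → ℂ} {c : ℂ} (k : ℕ)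
    (h : Tendsto (fun N : ℕ => (N : ℂ) ^ k * u N) atTop (𝓝 c)) :
    Tendsto (fun N : ℕ => (N.choose k : ℂ) * u N) atTop (𝓝 (1 / k.factorial * c)) := by
  refine ((tendsto_choose_div_pow k).mul h).congr' ?_
  filter_upwards [eventually_ne_atTop 0] with N hN
  field_simp

theorem limit_theorem_order_invariant_general
    {A : Type*} [Ring A] [Algebra ℂ A]
    (φ : A →ₗ[ℂ] ℂ)
    (b : ℕ → ℕ → A)
    -- order invariance of the joint distribution
    (horder : ∀ (m N : ℕ), 1 ≤ m → ∀ i j : Fin m → ℕ,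
      (∀ l, 1 ≤ i l ∧ i l ≤ N) → (∀ l, 1 ≤ j l ∧ j l ≤ N) →
      (∀ p q : Fin m, i p ≤ i q ↔ j p ≤ j q) →
      φ (List.ofFn fun l => b N (i l)).prod
        = φ (List.ofFn fun l => b N (j l)).prod)
    (n : ℕ) (hn : 1 ≤ n)
    -- the limits c(s) exist (s : {1,…,n} ↠ {1,…,k}, written 0-based as
    -- `s : Fin n → Fin k` and shifted by 1 when indexing b)
    (c : (k : ℕ) → (Fin n → Fin k) → ℂ)
    (hc : ∀ k : ℕ, 1 ≤ k → k ≤ n → ∀ s : Fin n → Fin k,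
      Function.Surjective s →
      Filter.Tendsto (fun N : ℕ =>
          (N : ℂ) ^ k * φ (List.ofFn fun l => b N ((s l : ℕ) + 1)).prod)
        Filter.atTop (nhds (c k s))) :
    Filter.Tendsto (fun N : ℕ => φ ((∑ i ∈ Finset.Icc 1 N, b N i) ^ n))
      Filter.atTop
      (nhds (∑ k ∈ Finset.Icc 1 n, (1 / (Nat.factorial k : ℂ)) *
        ∑ s ∈ Finset.univ.filter
            (fun s : Fin n → Fin k => Function.Surjective s), c k s)) := by
  have hpattern : ∀ N k (s : Fin n → Fin k), ∀ T ⊆ Icc 1 N, ∀ h : T.card = k,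
      φ (List.ofFn fun l => b N (T.orderEmbOfFin h (s l))).prod
        = φ (List.ofFn fun l => b N ((s l : ℕ) + 1)).prod := by
    intro N k s T hTN hT
    have hkN : k ≤ N := by simpa [hT] using card_le_card hTN
    refine horder n N hn _ _ (fun l => mem_Icc.1 (hTN (orderEmbOfFin_mem T hT (s l))))
      (fun l => ⟨by omega, by have := (s l).isLt; omega⟩) fun p q => ?_
    rw [OrderEmbedding.le_iff_le, Fin.le_def, Nat.add_le_add_iff_right]
  have hmoment : ∀ N : ℕ, φ ((∑ i ∈ Icc 1 N, b N i) ^ n)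
      = ∑ k ∈ Icc 1 n, ∑ s : Fin n → Fin k with Function.Surjective s,
          (N.choose k : ℂ) * φ (List.ofFn fun l => b N ((s l : ℕ) + 1)).prod := by
    intro N
    rw [sum_pow_eq_sum_piFinset_prod_ofFn, map_sum,
      sum_piFinset_eq_sum_surjective _ (by omega) _ _ fun k s _ => hpattern N k s]
    simp [nsmul_eq_mul]
  simp_rw [hmoment, mul_sum]
  refine tendsto_finsetSum _ fun k hk => tendsto_finsetSum _ fun s hs => ?_
  obtain ⟨hk1, hkn⟩ := mem_Icc.1 hk
  exact tendsto_choose_mul_of_tendsto_pow_mul k (hc k hk1 hkn s (mem_filter.1 hs).2)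

/-- Limit theorem for order invariant distributions. Given, for
each `N ≥ 1`, elements `b₁^{(N)}, …, b_N^{(N)}` of an algebraic probability
space `(A, φ)` whose joint distribution is order invariant, and assuming that
for every `1 ≤ k ≤ n` and every surjection `s : {1,…,n} → {1,…,k}` the limit
`c(s) = lim_N N^k φ(b_{s(1)}^{(N)} ⋯ b_{s(n)}^{(N)})` exists, the moments of
`S_N = b₁^{(N)} + ⋯ + b_N^{(N)}` satisfy
`lim_N φ(S_N^n) = Σ_{k=1}^n (1/k!) Σ_{s surjective} c(s)`.
Here `b N i` denotes `b_i^{(N)}` (with `1 ≤ i ≤ N` the meaningful range). -/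
theorem limit_theorem_order_invariant
    {A : Type*} [Ring A] [Algebra ℂ A]
    (φ : A →ₗ[ℂ] ℂ) (hφ1 : φ 1 = 1)
    (b : ℕ → ℕ → A)
    -- order invariance of the joint distribution
    (horder : ∀ (m N : ℕ), 1 ≤ m → ∀ i j : Fin m → ℕ,
      (∀ l, 1 ≤ i l ∧ i l ≤ N) → (∀ l, 1 ≤ j l ∧ j l ≤ N) →
      (∀ p q : Fin m, i p ≤ i q ↔ j p ≤ j q) →
      φ (List.ofFn fun l => b N (i l)).prod
        = φ (List.ofFn fun l => b N (j l)).prod)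
    (n : ℕ) (hn : 1 ≤ n)
    -- the limits c(s) exist (s : {1,…,n} ↠ {1,…,k}, written 0-based as
    -- `s : Fin n → Fin k` and shifted by 1 when indexing b)
    (c : (k : ℕ) → (Fin n → Fin k) → ℂ)
    (hc : ∀ k : ℕ, 1 ≤ k → k ≤ n → ∀ s : Fin n → Fin k,
      Function.Surjective s →
      Filter.Tendsto (fun N : ℕ =>
          (N : ℂ) ^ k * φ (List.ofFn fun l => b N ((s l : ℕ) + 1)).prod)
        Filter.atTop (nhds (c k s))) :
    Filter.Tendsto (fun N : ℕ => φ ((∑ i ∈ Finset.Icc 1 N, b N i) ^ n))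
      Filter.atTop
      (nhds (∑ k ∈ Finset.Icc 1 n, (1 / (Nat.factorial k : ℂ)) *
        ∑ s ∈ Finset.univ.filter
            (fun s : Fin n → Fin k => Function.Surjective s), c k s)) :=
  limit_theorem_order_invariant_general φ b horder n hn c hc
end

section
/- Let (A, φ) be an algebraic probability space and B an additive increment process in (A, φ) that is order invariant and has pyramidally independent increments. For N ≥ 1 and 1 ≤ i ≤ N put b_i^{(N)} := B((i−1)/N, i/N). Then for every n ≥ 1, every injective tuple i : {1,…,n} → {1,…,N}, and every N ≥ max_m i(m), one has N^n · φ(b_{i(1)}^{(N)} ⋯ b_{i(n)}^{(N)}) = φ(B(0,1))^n; in particular the limit as N → ∞ of N^n · φ(b_{i(1)}^{(N)} ⋯ b_{i(n)}^{(N)}) equals φ(B(0,1))^n. -/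
/-!
Order invariance applied to a single interval makes `φ (B s t)` depend only on `t - s`, so by
additivity `φ (B 0 1) = N * φ (B 0 (1/N))`. An injective tuple of indices gives pairwise disjoint
intervals `[(i-1)/N, i/N)`, and pyramidal independence, applied to the last factor with `a₂ = 1`,
peels the moment of the product into the product of the moments `φ (B 0 (1/N))`. Hence
`N ^ n * φ (b_{i(1)} ⋯ b_{i(n)}) = (N * φ (B 0 (1/N))) ^ n = φ (B 0 1) ^ n` for every `N ≥ 1`.
-/

open Set

theorem disjoint_Ico_natCast_sub_one_div {a b : ℕ} (hab : a ≠ b) (N : ℕ) :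
    Disjoint (Ico (((a : ℝ) - 1) / N) (a / N)) (Ico (((b : ℝ) - 1) / N) (b / N)) := by
  have hN : (0 : ℝ) ≤ N := N.cast_nonneg
  rw [Ico_disjoint_Ico]
  rcases hab.lt_or_gt with h | h
  · have : (a : ℝ) + 1 ≤ b := by exact_mod_cast h
    exact min_le_of_left_le (le_max_of_le_right (div_le_div_of_nonneg_right (by linarith) hN))
  · have : (b : ℝ) + 1 ≤ a := by exact_mod_cast h
    exact min_le_of_right_le (le_max_of_le_left (div_le_div_of_nonneg_right (by linarith) hN))

section IncrementProcess

variable {A : Type*} [Ring A] [Algebra ℂ A] (φ : A →ₗ[ℂ] ℂ) (B : ℝ → ℝ → A)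

/-- The paper's `A_E`. -/
def incrementAlgebra (E : Set ℝ) : Subalgebra ℂ A :=
  Algebra.adjoin ℂ {x : A | ∃ s t : ℝ, s < t ∧ Ico s t ⊆ E ∧ x = B s t}

def IsOrderInvariant : Prop :=
  ∀ (n : ℕ), 1 ≤ n → ∀ I : Fin n → ℝ × ℝ,
    (∀ m, (I m).1 < (I m).2) →
    (∀ a b : Fin n, a ≠ b → Disjoint (Ico (I a).1 (I a).2) (Ico (I b).1 (I b).2)) →
    ∀ τ : Fin n → ℝ,
    (∀ a b : Fin n, (I a).2 ≤ (I b).1 → (I a).2 + τ a ≤ (I b).1 + τ b) →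
    φ (List.ofFn fun m => B ((I m).1 + τ m) ((I m).2 + τ m)).prod
      = φ (List.ofFn fun m => B (I m).1 (I m).2).prod

def HasPyramidallyIndependentIncrements : Prop :=
  ∀ u v : ℝ, u < v →
    ∀ b ∈ incrementAlgebra B (Ico u v),
    ∀ a₁ ∈ incrementAlgebra B (Ico u v)ᶜ,
    ∀ a₂ ∈ incrementAlgebra B (Ico u v)ᶜ,
    φ (a₁ * b * a₂) = φ (a₁ * a₂) * φ b

variable {φ B}

theorem IsOrderInvariant.map_eq_map_zero_sub (horder : IsOrderInvariant φ B) {s t : ℝ}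
    (hst : s < t) : φ (B s t) = φ (B 0 (t - s)) := by
  have h := horder 1 le_rfl (fun _ => (0, t - s)) (fun _ => sub_pos.mpr hst)
    (fun a b hab => absurd (Subsingleton.elim a b) hab) (fun _ => s)
    (fun _ _ h => absurd h (by simpa using hst))
  simpa using h

theorem map_natCast_mul_of_map_eq_map_zero_sub
    (hadd : ∀ s t u : ℝ, s < t → t < u → B s u = B s t + B t u)
    (htrans : ∀ s t : ℝ, s < t → φ (B s t) = φ (B 0 (t - s)))
    {h : ℝ} (hh : 0 < h) {m : ℕ} (hm : 1 ≤ m) :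
    φ (B 0 (m * h)) = m * φ (B 0 h) := by
  induction m, hm using Nat.le_induction with
  | base => simp
  | succ m hm ih =>
    have hm_pos : (0 : ℝ) < m * h := mul_pos (by exact_mod_cast hm) hh
    have hstep : (m : ℝ) * h < (m + 1 : ℕ) * h := by gcongr; exact_mod_cast m.lt_succ_self
    rw [hadd 0 _ _ hm_pos hstep, map_add, ih, htrans _ _ hstep]
    push_cast
    ring_nf

theorem HasPyramidallyIndependentIncrements.map_prod_ofFn
    (hpyr : HasPyramidallyIndependentIncrements φ B) (hφ1 : φ 1 = 1) :
    ∀ {n : ℕ} (I : Fin n → ℝ × ℝ), (∀ m, (I m).1 < (I m).2) →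
      (∀ a b : Fin n, a ≠ b → Disjoint (Ico (I a).1 (I a).2) (Ico (I b).1 (I b).2)) →
      φ (List.ofFn fun m => B (I m).1 (I m).2).prod = ∏ m, φ (B (I m).1 (I m).2)
  | 0, _, _, _ => by simp [hφ1]
  | n + 1, I, hlt, hdisj => by
    set J := I (Fin.last n)
    have hinit : (List.ofFn fun m : Fin n => B (I m.castSucc).1 (I m.castSucc).2).prod
        ∈ incrementAlgebra B (Ico J.1 J.2)ᶜ := by
      refine Subalgebra.list_prod_mem _ (List.forall_mem_ofFn_iff.mpr fun m => ?_)
      refine Algebra.subset_adjoin ⟨_, _, hlt _, ?_, rfl⟩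
      exact subset_compl_iff_disjoint_right.mpr (hdisj _ _ (Fin.castSucc_lt_last m).ne)
    have hlast : B J.1 J.2 ∈ incrementAlgebra B (Ico J.1 J.2) :=
      Algebra.subset_adjoin ⟨_, _, hlt _, subset_rfl, rfl⟩
    have hsplit := hpyr J.1 J.2 (hlt _) _ hlast _ hinit 1 (Subalgebra.one_mem _)
    rw [mul_one, mul_one] at hsplit
    rw [List.ofFn_succ', List.prod_concat, hsplit, Fin.prod_univ_castSucc,
      map_prod_ofFn hpyr hφ1 _ (fun m => hlt _)
        (fun a b hab => hdisj _ _ (Fin.castSucc_injective n |>.ne hab))]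

theorem natCast_pow_mul_map_prod_eq_pow (hφ1 : φ 1 = 1)
    (hadd : ∀ s t u : ℝ, s < t → t < u → B s u = B s t + B t u)
    (horder : IsOrderInvariant φ B) (hpyr : HasPyramidallyIndependentIncrements φ B)
    {n : ℕ} {i : Fin n → ℕ} (hinj : Function.Injective i) {N : ℕ} (hN : 0 < N) :
    (N : ℂ) ^ n * φ (List.ofFn fun m =>
        B (((i m : ℝ) - 1) / (N : ℝ)) ((i m : ℝ) / (N : ℝ))).prod = φ (B 0 1) ^ n := by
  have hN' : (0 : ℝ) < N := by exact_mod_cast hN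
  have hlt : ∀ m, ((i m : ℝ) - 1) / N < (i m : ℝ) / N := fun m => by gcongr; linarith
  have hfactor : ∀ m, φ (B (((i m : ℝ) - 1) / N) ((i m : ℝ) / N)) = φ (B 0 (1 / N)) := fun m => by
    rw [horder.map_eq_map_zero_sub (hlt m), ← sub_div, sub_sub_cancel]
  have hscale : φ (B 0 1) = N * φ (B 0 (1 / N)) := by
    rw [← map_natCast_mul_of_map_eq_map_zero_sub hadd (fun _ _ => horder.map_eq_map_zero_sub)
      (one_div_pos.mpr hN') hN, mul_one_div_cancel hN'.ne']
  rw [hpyr.map_prod_ofFn hφ1 (fun m => (_, _)) hlt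
      (fun a b hab => disjoint_Ico_natCast_sub_one_div (hinj.ne hab) N),
    Finset.prod_congr rfl fun m _ => hfactor m, Finset.prod_const, Finset.card_fin, ← mul_pow,
    hscale]

end IncrementProcess

/-- For an order invariant additive increment process with
pyramidally independent increments, setting `b_i^{(N)} = B((i-1)/N, i/N)`, for
every injective tuple `i : {1,…,n} → ℕ` (with values `≥ 1`) and every
`N ≥ max_m i(m)` one has `N^n φ(b_{i(1)}^{(N)} ⋯ b_{i(n)}^{(N)}) = φ(B(0,1))^n`;
in particular `lim_N N^n φ(b_{i(1)}^{(N)} ⋯ b_{i(n)}^{(N)}) = φ(B(0,1))^n`. -/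
theorem injective_tuple_moment_of_order_invariant_process
    {A : Type*} [Ring A] [Algebra ℂ A]
    (φ : A →ₗ[ℂ] ℂ) (hφ1 : φ 1 = 1)
    (B : ℝ → ℝ → A)
    -- additivity of increments
    (hadd : ∀ s t u : ℝ, s < t → t < u → B s u = B s t + B t u)
    -- order invariance
    (horder : ∀ (n : ℕ), 1 ≤ n → ∀ I : Fin n → ℝ × ℝ,
      (∀ m, (I m).1 < (I m).2) →
      (∀ a b : Fin n, a ≠ b →
        Disjoint (Set.Ico (I a).1 (I a).2) (Set.Ico (I b).1 (I b).2)) →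
      ∀ τ : Fin n → ℝ,
      (∀ a b : Fin n, (I a).2 ≤ (I b).1 → (I a).2 + τ a ≤ (I b).1 + τ b) →
      φ (List.ofFn fun m => B ((I m).1 + τ m) ((I m).2 + τ m)).prod
        = φ (List.ofFn fun m => B (I m).1 (I m).2).prod)
    -- pyramidally independent increments
    (hpyr : ∀ u v : ℝ, u < v →
      ∀ b ∈ Algebra.adjoin ℂ
        {x : A | ∃ s t : ℝ, s < t ∧ Set.Ico s t ⊆ Set.Ico u v ∧ x = B s t},
      ∀ a₁ ∈ Algebra.adjoin ℂ
        {x : A | ∃ s t : ℝ, s < t ∧ Set.Ico s t ⊆ (Set.Ico u v)ᶜ ∧ x = B s t},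
      ∀ a₂ ∈ Algebra.adjoin ℂ
        {x : A | ∃ s t : ℝ, s < t ∧ Set.Ico s t ⊆ (Set.Ico u v)ᶜ ∧ x = B s t},
      φ (a₁ * b * a₂) = φ (a₁ * a₂) * φ b) :
    ∀ n : ℕ, 1 ≤ n → ∀ i : Fin n → ℕ, (∀ m, 1 ≤ i m) →
    Function.Injective i →
    (∀ N : ℕ, (∀ m, i m ≤ N) →
      (N : ℂ) ^ n * φ (List.ofFn fun m =>
          B (((i m : ℝ) - 1) / (N : ℝ)) ((i m : ℝ) / (N : ℝ))).prod
        = (φ (B 0 1)) ^ n) ∧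
    Filter.Tendsto (fun N : ℕ =>
        (N : ℂ) ^ n * φ (List.ofFn fun m =>
          B (((i m : ℝ) - 1) / (N : ℝ)) ((i m : ℝ) / (N : ℝ))).prod)
      Filter.atTop (nhds ((φ (B 0 1)) ^ n)) := by
  intro n hn i hi1 hinj
  have hmoment : ∀ N : ℕ, (∀ m, i m ≤ N) →
      (N : ℂ) ^ n * φ (List.ofFn fun m =>
          B (((i m : ℝ) - 1) / (N : ℝ)) ((i m : ℝ) / (N : ℝ))).prod = φ (B 0 1) ^ n :=
    fun N hN => natCast_pow_mul_map_prod_eq_pow hφ1 hadd horder hpyr hinj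
      ((hi1 ⟨0, hn⟩).trans (hN ⟨0, hn⟩))
  refine ⟨hmoment, tendsto_const_nhds.congr' ?_⟩
  filter_upwards [Filter.eventually_ge_atTop (Finset.univ.sup i)] with N hN
  exact (hmoment N fun m => (Finset.le_sup (Finset.mem_univ m)).trans hN).symm
end
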